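/- arXiv:2507.11018 — 2 statements merged into one kernel-verified Lean document; each statement's English description precedes it below -/
import Mathlib

section
/- Characterization of Pareto-efficient contracts: let (s*,p*) be an optimal contract. An implementable contract (s,p) is Pareto-efficient if and only if s_t = s*_t for all t, 0 ≤ p_0 ≤ δ·(π(s*_1) − π(0))/(1−δ), and p_t = (w(s*_{t−1}) − w(s*_t))/(1−δ) for every t ≥ 1. -/
/-!
The surplus `Π_t + W_t = Σ δ^k (π + w)(s_{t+k})` does not depend on payments. A path is the
path of an implementable contract iff it satisfies P-IC against the expert's outside option
`w(s_{t-1})/(1-δ)`, and on such a path every split of the surplus giving the expert at least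
`w(0)/(1-δ)` is implementable: hold him at his outside option after a signing bonus. So the
optimal path maximizes the surplus, and a contract is Pareto-efficient iff its path does too.

A surplus-maximizing path binds every P-IC from time `1` on: otherwise raise it slightly on the
block where it is flat, which keeps it feasible and, `π + w` being increasing, raises the
surplus. Binding determines `π(s_{t+1})` recursively, so by injectivity of `π` it determines the
path from its surplus; and binding fixes `W_t`, hence the payments for `t ≥ 1`, while P-IC at
time `0` bounds the bonus `p_0`.
-/

open Set Filter

/-- Principal's continuation value `Π_t(s,p) = Σ_{τ=t}^∞ δ^{τ−t}(π(s_τ) − p_τ)`. -/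
noncomputable def PiVal (δ : ℝ) (π : ℝ → ℝ) (s p : ℕ → ℝ) (t : ℕ) : ℝ :=
  ∑' k : ℕ, δ ^ k * (π (s (t + k)) - p (t + k))

/-- Expert's continuation value `W_t(s,p) = Σ_{τ=t}^∞ δ^{τ−t}(w(s_τ) + p_τ)`. -/
noncomputable def WVal (δ : ℝ) (w : ℝ → ℝ) (s p : ℕ → ℝ) (t : ℕ) : ℝ :=
  ∑' k : ℕ, δ ^ k * (w (s (t + k)) + p (t + k))

/-- A contract: `s` takes values in `[0,1]`, `s 0 = 0`, and `t ↦ δ^t·p_t` is summable. -/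
def IsContract (δ : ℝ) (s p : ℕ → ℝ) : Prop :=
  (∀ t, s t ∈ Set.Icc (0 : ℝ) 1) ∧ s 0 = 0 ∧ Summable fun t => δ ^ t * p t

/-- Implementability: feasibility (monotone `s`, nonnegative `p`) plus (P-IC) and (E-IC). -/
def Implementable (δ : ℝ) (π w : ℝ → ℝ) (s p : ℕ → ℝ) : Prop :=
  IsContract δ s p ∧ Monotone s ∧ (∀ t, 0 ≤ p t) ∧
  (∀ t, π (s t) / (1 - δ) ≤ PiVal δ π s p t) ∧
  (∀ t, w (s t) / (1 - δ) ≤ WVal δ w s p (t + 1))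

/-- An optimal contract maximizes the principal's time-0 profit among implementable contracts. -/
def Optimal (δ : ℝ) (π w : ℝ → ℝ) (s p : ℕ → ℝ) : Prop :=
  Implementable δ π w s p ∧
  ∀ s' p' : ℕ → ℝ, Implementable δ π w s' p' → PiVal δ π s' p' 0 ≤ PiVal δ π s p 0

/-- Pareto efficiency among implementable contracts (principal and expert). -/
def ParetoEfficient (δ : ℝ) (π w : ℝ → ℝ) (s p : ℕ → ℝ) : Prop :=
  Implementable δ π w s p ∧
  ¬ ∃ s' p' : ℕ → ℝ, Implementable δ π w s' p' ∧
      PiVal δ π s p 0 ≤ PiVal δ π s' p' 0 ∧ WVal δ w s p 0 ≤ WVal δ w s' p' 0 ∧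
      (PiVal δ π s p 0 < PiVal δ π s' p' 0 ∨ WVal δ w s p 0 < WVal δ w s' p' 0)

noncomputable def discSum (δ : ℝ) (f : ℕ → ℝ) (t : ℕ) : ℝ := ∑' k : ℕ, δ ^ k * f (t + k)

def TailSummable (δ : ℝ) (f : ℕ → ℝ) : Prop := ∀ t, Summable fun k : ℕ => δ ^ k * f (t + k)

section DiscSum

variable {δ : ℝ} {f g : ℕ → ℝ}

lemma tailSummable_of_abs_le (hδ : δ ∈ Ioo (0 : ℝ) 1) {C : ℝ} (hf : ∀ k, |f k| ≤ C) :
    TailSummable δ f := fun t =>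
  ((summable_geometric_of_lt_one hδ.1.le hδ.2).mul_left C).of_norm_bounded fun k => by
    rw [Real.norm_eq_abs, abs_mul, abs_of_pos (pow_pos hδ.1 k), mul_comm C]
    exact mul_le_mul_of_nonneg_left (hf _) (pow_nonneg hδ.1.le k)

lemma tailSummable_comp_of_continuousOn (hδ : δ ∈ Ioo (0 : ℝ) 1) {h : ℝ → ℝ}
    (hc : ContinuousOn h (Icc 0 1)) {s : ℕ → ℝ} (hs : ∀ t, s t ∈ Icc (0 : ℝ) 1) :
    TailSummable δ fun t => h (s t) :=
  let ⟨_, hC⟩ := isCompact_Icc.exists_bound_of_continuousOn hc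
  tailSummable_of_abs_le hδ fun k => hC _ (hs k)

lemma tailSummable_of_summable (hδ : δ ≠ 0) (hf : Summable fun t => δ ^ t * f t) :
    TailSummable δ f := fun t =>
  (((summable_nat_add_iff t).2 hf).mul_left (δ ^ t)⁻¹).congr fun k => by
    rw [pow_add, add_comm k t]
    field_simp

lemma TailSummable.add (hf : TailSummable δ f) (hg : TailSummable δ g) :
    TailSummable δ fun τ => f τ + g τ := fun t => by
  simpa only [mul_add] using (hf t).add (hg t)

lemma TailSummable.sub (hf : TailSummable δ f) (hg : TailSummable δ g) :
    TailSummable δ fun τ => f τ - g τ := fun t => by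
  simpa only [mul_sub] using (hf t).sub (hg t)

lemma discSum_add (hf : TailSummable δ f) (hg : TailSummable δ g) (t : ℕ) :
    discSum δ (fun τ => f τ + g τ) t = discSum δ f t + discSum δ g t := by
  simp only [discSum, mul_add, (hf t).tsum_add (hg t)]

lemma discSum_eq_add (hf : TailSummable δ f) (t : ℕ) :
    discSum δ f t = f t + δ * discSum δ f (t + 1) := by
  simp only [discSum, (hf t).tsum_eq_zero_add, ← tsum_mul_left]
  congr 1
  · simp
  · exact tsum_congr fun k => by rw [pow_succ, ← add_assoc, add_right_comm t 1 k]; ring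

lemma discSum_const (hδ : δ ∈ Ioo (0 : ℝ) 1) (c : ℝ) (t : ℕ) :
    discSum δ (fun _ => c) t = c / (1 - δ) := by
  simp only [discSum, tsum_mul_right, tsum_geometric_of_lt_one hδ.1.le hδ.2]
  ring

lemma discSum_congr {t : ℕ} (h : ∀ τ, t ≤ τ → f τ = g τ) : discSum δ f t = discSum δ g t :=
  tsum_congr fun k => by rw [h (t + k) (Nat.le_add_right t k)]

lemma discSum_mono (hδ : 0 ≤ δ) (hf : TailSummable δ f) (hg : TailSummable δ g) {t : ℕ}
    (h : ∀ τ, t ≤ τ → f τ ≤ g τ) : discSum δ f t ≤ discSum δ g t :=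
  (hf t).tsum_le_tsum (fun k => mul_le_mul_of_nonneg_left (h _ (Nat.le_add_right t k))
    (pow_nonneg hδ k)) (hg t)

lemma discSum_lt (hδ : 0 < δ) (hf : TailSummable δ f) (hg : TailSummable δ g) {t n : ℕ}
    (h : ∀ τ, t ≤ τ → f τ ≤ g τ) (htn : t ≤ n) (hn : f n < g n) :
    discSum δ f t < discSum δ g t := by
  refine (hf t).tsum_lt_tsum (i := n - t) (fun k => mul_le_mul_of_nonneg_left
    (h _ (Nat.le_add_right t k)) (pow_nonneg hδ.le k)) ?_ (hg t)
  rw [Nat.add_sub_cancel' htn]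
  exact mul_lt_mul_of_pos_left hn (pow_pos hδ _)

end DiscSum

noncomputable def surplus (δ : ℝ) (π w : ℝ → ℝ) (s : ℕ → ℝ) (t : ℕ) : ℝ :=
  discSum δ (fun τ => π (s τ) + w (s τ)) t

section Values

variable {δ : ℝ} {π w : ℝ → ℝ} {s p : ℕ → ℝ}

lemma PiVal_eq_discSum (t : ℕ) : PiVal δ π s p t = discSum δ (fun τ => π (s τ) - p τ) t := rfl

lemma WVal_eq_discSum (t : ℕ) : WVal δ w s p t = discSum δ (fun τ => w (s τ) + p τ) t := rfl

lemma PiVal_add_WVal (hδ : δ ∈ Ioo (0 : ℝ) 1) (hπc : ContinuousOn π (Icc 0 1))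
    (hwc : ContinuousOn w (Icc 0 1)) (hs : ∀ t, s t ∈ Icc (0 : ℝ) 1) (hp : TailSummable δ p)
    (t : ℕ) : PiVal δ π s p t + WVal δ w s p t = surplus δ π w s t := by
  have hπs := tailSummable_comp_of_continuousOn hδ hπc hs
  have hws := tailSummable_comp_of_continuousOn hδ hwc hs
  rw [PiVal_eq_discSum, WVal_eq_discSum, ← discSum_add (hπs.sub hp) (hws.add hp), surplus]
  exact discSum_congr fun τ _ => by ring

lemma PiVal_eq_add (hδ : δ ∈ Ioo (0 : ℝ) 1) (hπc : ContinuousOn π (Icc 0 1))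
    (hs : ∀ t, s t ∈ Icc (0 : ℝ) 1) (hp : TailSummable δ p) (t : ℕ) :
    PiVal δ π s p t = π (s t) - p t + δ * PiVal δ π s p (t + 1) :=
  discSum_eq_add ((tailSummable_comp_of_continuousOn hδ hπc hs).sub hp) t

lemma WVal_eq_add (hδ : δ ∈ Ioo (0 : ℝ) 1) (hwc : ContinuousOn w (Icc 0 1))
    (hs : ∀ t, s t ∈ Icc (0 : ℝ) 1) (hp : TailSummable δ p) (t : ℕ) :
    WVal δ w s p t = w (s t) + p t + δ * WVal δ w s p (t + 1) :=
  discSum_eq_add ((tailSummable_comp_of_continuousOn hδ hwc hs).add hp) t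

lemma surplus_eq_add (hδ : δ ∈ Ioo (0 : ℝ) 1) (hπc : ContinuousOn π (Icc 0 1))
    (hwc : ContinuousOn w (Icc 0 1)) (hs : ∀ t, s t ∈ Icc (0 : ℝ) 1) (t : ℕ) :
    surplus δ π w s t = π (s t) + w (s t) + δ * surplus δ π w s (t + 1) :=
  discSum_eq_add ((tailSummable_comp_of_continuousOn hδ hπc hs).add
    (tailSummable_comp_of_continuousOn hδ hwc hs)) t

lemma Implementable.tailSummable (hδ : δ ∈ Ioo (0 : ℝ) 1) (himp : Implementable δ π w s p) :
    TailSummable δ p :=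
  tailSummable_of_summable hδ.1.ne' himp.1.2.2

/-- At `t = 0` the truncated `t - 1` makes this `w (s 0) / (1 - δ) ≤ W_0`, a consequence of E-IC
at time `0` and `p 0 ≥ 0`. -/
lemma Implementable.div_le_WVal (hδ : δ ∈ Ioo (0 : ℝ) 1) (hwc : ContinuousOn w (Icc 0 1))
    (himp : Implementable δ π w s p) (t : ℕ) : w (s (t - 1)) / (1 - δ) ≤ WVal δ w s p t := by
  have hpsum := himp.tailSummable hδ
  obtain ⟨⟨hs, -, -⟩, -, hp, -, hEIC⟩ := himp
  cases t with
  | succ t => exact hEIC t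
  | zero =>
    have h1δ : 0 < 1 - δ := sub_pos.2 hδ.2
    have hrec := WVal_eq_add hδ hwc hs hpsum 0
    have hδW := mul_le_mul_of_nonneg_left (hEIC 0) hδ.1.le
    have hsplit : w (s 0) / (1 - δ) = w (s 0) + δ * (w (s 0) / (1 - δ)) := by
      field_simp; ring
    simp only [Nat.zero_sub]
    linarith [hp 0]

end Values

/-- The paths of implementable contracts: the inequality is P-IC combined with the expert's
lower bound `W_t ≥ w (s (t - 1)) / (1 - δ)`, and `bindingPay` shows it is also sufficient. -/
structure IsFeasiblePath (δ : ℝ) (π w : ℝ → ℝ) (s : ℕ → ℝ) : Prop where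
  mem_Icc : ∀ t, s t ∈ Icc (0 : ℝ) 1
  zero : s 0 = 0
  mono : Monotone s
  le_surplus : ∀ t, (π (s t) + w (s (t - 1))) / (1 - δ) ≤ surplus δ π w s t

/-- Keeps the expert at his outside option, `W_t = w (s (t - 1)) / (1 - δ)` for `t ≥ 1`, after a
signing bonus `c`. -/
noncomputable def bindingPay (δ : ℝ) (w : ℝ → ℝ) (s : ℕ → ℝ) (c : ℝ) (t : ℕ) : ℝ :=
  if t = 0 then c else (w (s (t - 1)) - w (s t)) / (1 - δ)

section Feasible

variable {δ : ℝ} {π w : ℝ → ℝ} {s p : ℕ → ℝ}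

lemma Implementable.isFeasiblePath (hδ : δ ∈ Ioo (0 : ℝ) 1) (hπc : ContinuousOn π (Icc 0 1))
    (hwc : ContinuousOn w (Icc 0 1)) (himp : Implementable δ π w s p) :
    IsFeasiblePath δ π w s where
  mem_Icc := himp.1.1
  zero := himp.1.2.1
  mono := himp.2.1
  le_surplus t := by
    have hPIC := himp.2.2.2.1 t
    have hW := himp.div_le_WVal hδ hwc t
    have hsum := PiVal_add_WVal hδ hπc hwc himp.1.1 (himp.tailSummable hδ) t
    rw [add_div]
    linarith

lemma IsFeasiblePath.le_surplus_zero (hF : IsFeasiblePath δ π w s) :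
    (π 0 + w 0) / (1 - δ) ≤ surplus δ π w s 0 := by
  simpa [hF.zero] using hF.le_surplus 0

lemma bindingPay_nonneg (hδ : δ ∈ Ioo (0 : ℝ) 1) (hwa : StrictAntiOn w (Icc 0 1))
    (hF : IsFeasiblePath δ π w s) {c : ℝ} (hc : 0 ≤ c) (t : ℕ) : 0 ≤ bindingPay δ w s c t := by
  unfold bindingPay
  split_ifs
  · exact hc
  · exact div_nonneg (sub_nonneg.2 (hwa.antitoneOn (hF.mem_Icc _) (hF.mem_Icc _)
      (hF.mono (Nat.sub_le t 1)))) (sub_pos.2 hδ.2).le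

lemma tailSummable_bindingPay (hδ : δ ∈ Ioo (0 : ℝ) 1) (hwc : ContinuousOn w (Icc 0 1))
    (hs : ∀ t, s t ∈ Icc (0 : ℝ) 1) (c : ℝ) : TailSummable δ (bindingPay δ w s c) := by
  obtain ⟨C, hC⟩ := isCompact_Icc.exists_bound_of_continuousOn hwc
  refine tailSummable_of_abs_le hδ (C := |c| + 2 * C / (1 - δ)) fun t => ?_
  have hCs : ∀ t, |w (s t)| ≤ C := fun t => hC _ (hs t)
  have hC0 : 0 ≤ C := (abs_nonneg _).trans (hCs 0)
  have h1δ : 0 < 1 - δ := sub_pos.2 hδ.2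
  unfold bindingPay
  split_ifs
  · linarith [div_nonneg (mul_nonneg zero_le_two hC0) h1δ.le]
  · rw [abs_div, abs_of_pos h1δ]
    have hdiff : |w (s (t - 1)) - w (s t)| ≤ 2 * C :=
      (abs_sub _ _).trans (by linarith [hCs (t - 1), hCs t])
    linarith [abs_nonneg c, div_le_div_of_nonneg_right hdiff h1δ.le]

lemma WVal_bindingPay (hδ : δ ∈ Ioo (0 : ℝ) 1) (hwc : ContinuousOn w (Icc 0 1))
    (hs : ∀ t, s t ∈ Icc (0 : ℝ) 1) (c : ℝ) {t : ℕ} (ht : 1 ≤ t) :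
    WVal δ w s (bindingPay δ w s c) t = w (s (t - 1)) / (1 - δ) := by
  have hws := tailSummable_comp_of_continuousOn hδ hwc hs
  have h1δ : 1 - δ ≠ 0 := (sub_pos.2 hδ.2).ne'
  have htelescope : discSum δ (bindingPay δ w s c) t =
      (1 - δ)⁻¹ * (discSum δ (fun τ => w (s τ)) (t - 1) - discSum δ (fun τ => w (s τ)) t) := by
    rw [discSum, discSum, discSum, ← (hws (t - 1)).tsum_sub (hws t), ← tsum_mul_left]
    refine tsum_congr fun k => ?_
    rw [bindingPay, if_neg (by omega), show t + k - 1 = t - 1 + k by omega]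
    field_simp
  have hrec := discSum_eq_add hws (t - 1)
  rw [Nat.sub_add_cancel ht] at hrec
  rw [WVal_eq_discSum, discSum_add hws (tailSummable_bindingPay hδ hwc hs c), htelescope, hrec]
  field_simp
  ring

lemma WVal_bindingPay_zero (hδ : δ ∈ Ioo (0 : ℝ) 1) (hwc : ContinuousOn w (Icc 0 1))
    (hs : ∀ t, s t ∈ Icc (0 : ℝ) 1) (c : ℝ) :
    WVal δ w s (bindingPay δ w s c) 0 = w (s 0) / (1 - δ) + c := by
  rw [WVal_eq_add hδ hwc hs (tailSummable_bindingPay hδ hwc hs c),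
    WVal_bindingPay hδ hwc hs c le_rfl, bindingPay, if_pos rfl]
  field_simp [(sub_pos.2 hδ.2).ne']
  ring

lemma PiVal_bindingPay_zero (hδ : δ ∈ Ioo (0 : ℝ) 1) (hπc : ContinuousOn π (Icc 0 1))
    (hwc : ContinuousOn w (Icc 0 1)) (hs : ∀ t, s t ∈ Icc (0 : ℝ) 1) (c : ℝ) :
    PiVal δ π s (bindingPay δ w s c) 0 = surplus δ π w s 0 - w (s 0) / (1 - δ) - c := by
  have hsum := PiVal_add_WVal hδ hπc hwc hs (tailSummable_bindingPay hδ hwc hs c) 0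
  rw [WVal_bindingPay_zero hδ hwc hs c] at hsum
  linarith

lemma IsFeasiblePath.implementable_bindingPay (hδ : δ ∈ Ioo (0 : ℝ) 1)
    (hπc : ContinuousOn π (Icc 0 1)) (hwc : ContinuousOn w (Icc 0 1))
    (hwa : StrictAntiOn w (Icc 0 1)) (hF : IsFeasiblePath δ π w s) {c : ℝ} (hc : 0 ≤ c)
    (hcS : (π 0 + w 0) / (1 - δ) + c ≤ surplus δ π w s 0) :
    Implementable δ π w s (bindingPay δ w s c) := by
  have hq := tailSummable_bindingPay hδ hwc hF.mem_Icc c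
  refine ⟨⟨hF.mem_Icc, hF.zero, by simpa using hq 0⟩, hF.mono, bindingPay_nonneg hδ hwa hF hc,
    fun t => ?_, fun t => (WVal_bindingPay hδ hwc hF.mem_Icc c (Nat.le_add_left 1 t)).ge⟩
  have hsum := PiVal_add_WVal hδ hπc hwc hF.mem_Icc hq t
  rcases Nat.eq_zero_or_pos t with rfl | ht
  · rw [WVal_bindingPay_zero hδ hwc hF.mem_Icc, hF.zero] at hsum
    rw [hF.zero]
    linarith [add_div (π 0) (w 0) (1 - δ)]
  · rw [WVal_bindingPay hδ hwc hF.mem_Icc c ht] at hsum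
    linarith [hF.le_surplus t, add_div (π (s t)) (w (s (t - 1))) (1 - δ)]

end Feasible

section Optimal

variable {δ : ℝ} {π w : ℝ → ℝ} {s p sStar pStar : ℕ → ℝ}

lemma Optimal.surplus_le (hδ : δ ∈ Ioo (0 : ℝ) 1) (hπc : ContinuousOn π (Icc 0 1))
    (hwc : ContinuousOn w (Icc 0 1)) (hwa : StrictAntiOn w (Icc 0 1))
    (hopt : Optimal δ π w sStar pStar) (hF : IsFeasiblePath δ π w s) :
    surplus δ π w s 0 ≤ surplus δ π w sStar 0 := by
  have hle := hopt.2 _ _ (hF.implementable_bindingPay hδ hπc hwc hwa le_rfl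
    (by simpa using hF.le_surplus_zero))
  have hW := hopt.1.div_le_WVal hδ hwc 0
  have hsum := PiVal_add_WVal hδ hπc hwc hopt.1.1.1 (hopt.1.tailSummable hδ) 0
  rw [PiVal_bindingPay_zero hδ hπc hwc hF.mem_Icc] at hle
  simp only [Nat.zero_sub, hF.zero, hopt.1.1.2.1] at hW hle
  linarith

lemma Optimal.PiVal_le (hδ : δ ∈ Ioo (0 : ℝ) 1) (hπc : ContinuousOn π (Icc 0 1))
    (hwc : ContinuousOn w (Icc 0 1)) (hwa : StrictAntiOn w (Icc 0 1))
    (hopt : Optimal δ π w sStar pStar) (himp : Implementable δ π w s p) :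
    PiVal δ π s p 0 ≤ surplus δ π w sStar 0 - w 0 / (1 - δ) := by
  have hS := hopt.surplus_le hδ hπc hwc hwa (himp.isFeasiblePath hδ hπc hwc)
  have hW := himp.div_le_WVal hδ hwc 0
  have hsum := PiVal_add_WVal hδ hπc hwc himp.1.1 (himp.tailSummable hδ) 0
  simp only [Nat.zero_sub, himp.1.2.1] at hW
  linarith

lemma Optimal.optimal_bindingPay (hδ : δ ∈ Ioo (0 : ℝ) 1) (hπc : ContinuousOn π (Icc 0 1))
    (hwc : ContinuousOn w (Icc 0 1)) (hwa : StrictAntiOn w (Icc 0 1))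
    (hopt : Optimal δ π w sStar pStar) (hF : IsFeasiblePath δ π w s)
    (hS : surplus δ π w s 0 = surplus δ π w sStar 0) :
    Optimal δ π w s (bindingPay δ w s 0) := by
  refine ⟨hF.implementable_bindingPay hδ hπc hwc hwa le_rfl (by simpa using hF.le_surplus_zero),
    fun s' p' himp' => ?_⟩
  rw [PiVal_bindingPay_zero hδ hπc hwc hF.mem_Icc, hS, hF.zero, sub_zero]
  exact hopt.PiVal_le hδ hπc hwc hwa himp'

/-- If the surplus of `s` fell short of the optimum, the optimal path with a signing bonus
matching the expert's value under `(s, p)` would Pareto-dominate `(s, p)`. -/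
lemma Optimal.surplus_eq_of_paretoEfficient (hδ : δ ∈ Ioo (0 : ℝ) 1)
    (hπc : ContinuousOn π (Icc 0 1)) (hwc : ContinuousOn w (Icc 0 1))
    (hwa : StrictAntiOn w (Icc 0 1)) (hopt : Optimal δ π w sStar pStar)
    (hpe : ParetoEfficient δ π w s p) : surplus δ π w s 0 = surplus δ π w sStar 0 := by
  obtain ⟨himp, hnot⟩ := hpe
  have hF := himp.isFeasiblePath hδ hπc hwc
  have hFStar := hopt.1.isFeasiblePath hδ hπc hwc
  refine (hopt.surplus_le hδ hπc hwc hwa hF).eq_of_not_lt fun hlt => hnot ?_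
  set c := WVal δ w s p 0 - w 0 / (1 - δ)
  have hW := himp.div_le_WVal hδ hwc 0
  have hPIC := himp.2.2.2.1 0
  have hsum := PiVal_add_WVal hδ hπc hwc himp.1.1 (himp.tailSummable hδ) 0
  simp only [Nat.zero_sub, himp.1.2.1] at hW hPIC
  have hWq := WVal_bindingPay_zero hδ hwc hFStar.mem_Icc c
  have hPiq := PiVal_bindingPay_zero hδ hπc hwc hFStar.mem_Icc c
  rw [hFStar.zero] at hWq hPiq
  refine ⟨sStar, bindingPay δ w sStar c,
    hFStar.implementable_bindingPay hδ hπc hwc hwa (by linarith) ?_, ?_, ?_, Or.inl ?_⟩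
  · linarith [add_div (π 0) (w 0) (1 - δ)]
  all_goals linarith

lemma Optimal.paretoEfficient_of_surplus_eq (hδ : δ ∈ Ioo (0 : ℝ) 1)
    (hπc : ContinuousOn π (Icc 0 1)) (hwc : ContinuousOn w (Icc 0 1))
    (hwa : StrictAntiOn w (Icc 0 1)) (hopt : Optimal δ π w sStar pStar)
    (himp : Implementable δ π w s p) (hS : surplus δ π w s 0 = surplus δ π w sStar 0) :
    ParetoEfficient δ π w s p := by
  refine ⟨himp, fun ⟨s', p', himp', hPi, hW, hlt⟩ => ?_⟩
  have hS' := hopt.surplus_le hδ hπc hwc hwa (himp'.isFeasiblePath hδ hπc hwc)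
  have hsum := PiVal_add_WVal hδ hπc hwc himp.1.1 (himp.tailSummable hδ) 0
  have hsum' := PiVal_add_WVal hδ hπc hwc himp'.1.1 (himp'.tailSummable hδ) 0
  rcases hlt with hlt | hlt <;> linarith

end Optimal

section Surplus

variable {δ : ℝ} {π w : ℝ → ℝ} {s s' : ℕ → ℝ}

lemma surplus_le_surplus (hδ : δ ∈ Ioo (0 : ℝ) 1) (hπc : ContinuousOn π (Icc 0 1))
    (hwc : ContinuousOn w (Icc 0 1)) (hGm : StrictMonoOn (fun x => π x + w x) (Icc 0 1))
    (hs : ∀ t, s t ∈ Icc (0 : ℝ) 1) (hs' : ∀ t, s' t ∈ Icc (0 : ℝ) 1) {t : ℕ}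
    (hle : ∀ τ, t ≤ τ → s τ ≤ s' τ) : surplus δ π w s t ≤ surplus δ π w s' t :=
  discSum_mono hδ.1.le ((tailSummable_comp_of_continuousOn hδ hπc hs).add
      (tailSummable_comp_of_continuousOn hδ hwc hs))
    ((tailSummable_comp_of_continuousOn hδ hπc hs').add
      (tailSummable_comp_of_continuousOn hδ hwc hs'))
    fun τ hτ => hGm.monotoneOn (hs τ) (hs' τ) (hle τ hτ)

lemma surplus_lt_surplus (hδ : δ ∈ Ioo (0 : ℝ) 1) (hπc : ContinuousOn π (Icc 0 1))
    (hwc : ContinuousOn w (Icc 0 1)) (hGm : StrictMonoOn (fun x => π x + w x) (Icc 0 1))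
    (hs : ∀ t, s t ∈ Icc (0 : ℝ) 1) (hs' : ∀ t, s' t ∈ Icc (0 : ℝ) 1) {t n : ℕ}
    (hle : ∀ τ, t ≤ τ → s τ ≤ s' τ) (htn : t ≤ n) (hn : s n < s' n) :
    surplus δ π w s t < surplus δ π w s' t :=
  discSum_lt hδ.1 ((tailSummable_comp_of_continuousOn hδ hπc hs).add
      (tailSummable_comp_of_continuousOn hδ hwc hs))
    ((tailSummable_comp_of_continuousOn hδ hπc hs').add
      (tailSummable_comp_of_continuousOn hδ hwc hs'))
    (fun τ hτ => hGm.monotoneOn (hs τ) (hs' τ) (hle τ hτ)) htn (hGm (hs n) (hs' n) hn)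

lemma IsFeasiblePath.div_lt_surplus (hδ : δ ∈ Ioo (0 : ℝ) 1) (hπc : ContinuousOn π (Icc 0 1))
    (hwc : ContinuousOn w (Icc 0 1)) (hGm : StrictMonoOn (fun x => π x + w x) (Icc 0 1))
    (hF : IsFeasiblePath δ π w s) {t n : ℕ} (htn : t ≤ n) (hn : s t < s n) :
    (π (s t) + w (s t)) / (1 - δ) < surplus δ π w s t :=
  (discSum_const hδ _ t).symm.trans_lt <| surplus_lt_surplus (s := fun _ => s t) hδ hπc hwc hGm
    (fun _ => hF.mem_Icc t) hF.mem_Icc (fun _ hτ => hF.mono hτ) htn hn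

end Surplus

def raiseBlock (s : ℕ → ℝ) (T n : ℕ) (x : ℝ) (τ : ℕ) : ℝ := if T ≤ τ ∧ τ < n then x else s τ

section Binding

variable {δ : ℝ} {π w : ℝ → ℝ} {s : ℕ → ℝ}

/-- Raising `s` only lowers the outside options `w (s (t - 1))` and raises the surpluses. -/
lemma IsFeasiblePath.isFeasiblePath_raiseBlock (hδ : δ ∈ Ioo (0 : ℝ) 1)
    (hπc : ContinuousOn π (Icc 0 1)) (hwc : ContinuousOn w (Icc 0 1))
    (hwa : StrictAntiOn w (Icc 0 1)) (hGm : StrictMonoOn (fun x => π x + w x) (Icc 0 1))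
    (hF : IsFeasiblePath δ π w s)
    {T n : ℕ} {x : ℝ} (hT : 1 ≤ T) (hblock : ∀ τ, T ≤ τ → τ < n → s τ = s T) (hx : s T < x)
    (hxn : x ≤ s n)
    (hslack : ∀ τ, T ≤ τ → τ < n → (π x + w (s (τ - 1))) / (1 - δ) ≤ surplus δ π w s τ) :
    IsFeasiblePath δ π w (raiseBlock s T n x) ∧
      surplus δ π w s 0 < surplus δ π w (raiseBlock s T n x) 0 := by
  have hxI : x ∈ Icc (0 : ℝ) 1 := ⟨(hF.mem_Icc T).1.trans hx.le, hxn.trans (hF.mem_Icc n).2⟩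
  have hmem : ∀ τ, raiseBlock s T n x τ ∈ Icc (0 : ℝ) 1 := fun τ => by
    unfold raiseBlock; split_ifs
    exacts [hxI, hF.mem_Icc τ]
  have hle : ∀ τ, s τ ≤ raiseBlock s T n x τ := fun τ => by
    unfold raiseBlock; split_ifs with h
    exacts [(hblock τ h.1 h.2).trans_lt hx |>.le, le_rfl]
  have hS : ∀ t, surplus δ π w s t ≤ surplus δ π w (raiseBlock s T n x) t :=
    fun t => surplus_le_surplus hδ hπc hwc hGm hF.mem_Icc hmem fun τ _ => hle τ
  have hw : ∀ τ, w (raiseBlock s T n x τ) ≤ w (s τ) :=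
    fun τ => hwa.antitoneOn (hF.mem_Icc τ) (hmem τ) (hle τ)
  have hTn : T < n := lt_of_not_ge fun h => (hx.trans_le hxn).not_ge (hF.mono h)
  refine ⟨⟨hmem, by simp [raiseBlock, hF.zero, show ¬T ≤ 0 by omega], fun i j hij => ?_,
    fun t => ?_⟩, ?_⟩
  · unfold raiseBlock
    split_ifs with hi hj hj
    · exact le_rfl
    · exact hxn.trans (hF.mono (by omega))
    · exact (hF.mono (by omega : i ≤ T)).trans hx.le
    · exact hF.mono hij
  · have h1δ : 0 < 1 - δ := sub_pos.2 hδ.2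
    calc _ ≤ (π (raiseBlock s T n x t) + w (s (t - 1))) / (1 - δ) := by gcongr; exact hw _
      _ ≤ surplus δ π w s t := ?_
      _ ≤ _ := hS t
    unfold raiseBlock
    split_ifs with h
    exacts [hslack t h.1 h.2, hF.le_surplus t]
  · exact surplus_lt_surplus hδ hπc hwc hGm hF.mem_Icc hmem (fun τ _ => hle τ) (Nat.zero_le T)
      (by simpa [raiseBlock, hTn] using hx)

lemma IsFeasiblePath.exists_lt_of_slack (hδ : δ ∈ Ioo (0 : ℝ) 1)
    (hwa : StrictAntiOn w (Icc 0 1)) (hF : IsFeasiblePath δ π w s) {T : ℕ}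
    (hslack : (π (s T) + w (s (T - 1))) / (1 - δ) < surplus δ π w s T) : ∃ n, s T < s n := by
  by_contra! hmax
  have hconst : surplus δ π w s T = (π (s T) + w (s T)) / (1 - δ) := by
    rw [surplus, ← discSum_const hδ]
    exact discSum_congr fun τ hτ => by rw [(hmax τ).antisymm (hF.mono hτ)]
  have hw := hwa.antitoneOn (hF.mem_Icc _) (hF.mem_Icc T) (hF.mono (Nat.sub_le T 1))
  rw [hconst] at hslack
  exact hslack.not_ge (div_le_div_of_nonneg_right (by linarith) (sub_pos.2 hδ.2).le)

/-- Take `n` the first time `s` exceeds `s T`. On `[T, n)` the path is flat, so slack at `T`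
makes every constraint of the block slack, and right-continuity of `π` leaves room for `x`. -/
lemma IsFeasiblePath.exists_raiseBlock (hδ : δ ∈ Ioo (0 : ℝ) 1)
    (hπc : ContinuousOn π (Icc 0 1)) (hwc : ContinuousOn w (Icc 0 1))
    (hwa : StrictAntiOn w (Icc 0 1)) (hGm : StrictMonoOn (fun x => π x + w x) (Icc 0 1))
    (hF : IsFeasiblePath δ π w s) {T : ℕ}
    (hslack : (π (s T) + w (s (T - 1))) / (1 - δ) < surplus δ π w s T) :
    ∃ n x, (∀ τ, T ≤ τ → τ < n → s τ = s T) ∧ s T < x ∧ x ≤ s n ∧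
      ∀ τ, T ≤ τ → τ < n → (π x + w (s (τ - 1))) / (1 - δ) ≤ surplus δ π w s τ := by
  classical
  have h1δ : 0 < 1 - δ := sub_pos.2 hδ.2
  have hex := hF.exists_lt_of_slack hδ hwa hslack
  set n := Nat.find hex
  have hn : s T < s n := Nat.find_spec hex
  have hblock : ∀ τ, T ≤ τ → τ < n → s τ = s T :=
    fun τ hTτ hτn => (not_lt.1 (Nat.find_min hex hτn)).antisymm (hF.mono hTτ)
  have hblockSlack : ∀ τ ∈ Finset.Ico T n,
      π (s T) < (1 - δ) * surplus δ π w s τ - w (s (τ - 1)) := fun τ hτ => by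
    obtain ⟨hTτ, hτn⟩ := Finset.mem_Ico.1 hτ
    suffices (π (s T) + w (s (τ - 1))) / (1 - δ) < surplus δ π w s τ by
      rw [div_lt_iff₀ h1δ] at this; linarith
    rcases hTτ.eq_or_lt with rfl | hTτ
    · exact hslack
    · have hτ := hF.div_lt_surplus hδ hπc hwc hGm hτn.le ((hblock τ hTτ.le hτn).trans_lt hn)
      rw [hblock (τ - 1) (by omega) (by omega)]
      rwa [hblock τ hTτ.le hτn] at hτ
  have hcont : ContinuousWithinAt π (Ioc (s T) (s n)) (s T) :=
    (hπc _ (hF.mem_Icc T)).mono fun y hy =>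
      ⟨(hF.mem_Icc T).1.trans hy.1.le, hy.2.trans (hF.mem_Icc n).2⟩
  have := left_nhdsWithin_Ioc_neBot hn
  obtain ⟨x, ⟨hx, hxn⟩, hxSlack⟩ := (eventually_mem_nhdsWithin.and
    ((Finset.Ico T n).eventually_all.2 fun τ hτ =>
      hcont.eventually (gt_mem_nhds (hblockSlack τ hτ)))).exists
  refine ⟨n, x, hblock, hx, hxn, fun τ hTτ hτn => ?_⟩
  have := hxSlack τ (Finset.mem_Ico.2 ⟨hTτ, hτn⟩)
  rw [div_le_iff₀ h1δ]
  linarith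

/-- From time `1` on, every P-IC binds when the expert is held at his outside option. -/
def IsBinding (δ : ℝ) (π w : ℝ → ℝ) (s : ℕ → ℝ) : Prop :=
  ∀ t, 1 ≤ t → surplus δ π w s t = (π (s t) + w (s (t - 1))) / (1 - δ)

theorem Optimal.isBinding (hδ : δ ∈ Ioo (0 : ℝ) 1) (hπc : ContinuousOn π (Icc 0 1))
    (hwc : ContinuousOn w (Icc 0 1)) (hwa : StrictAntiOn w (Icc 0 1))
    (hGm : StrictMonoOn (fun x => π x + w x) (Icc 0 1)) {p : ℕ → ℝ}
    (hopt : Optimal δ π w s p) : IsBinding δ π w s := by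
  intro T hT
  have hF := hopt.1.isFeasiblePath hδ hπc hwc
  refine ((hF.le_surplus T).eq_of_not_lt fun hslack => ?_).symm
  obtain ⟨n, x, hblock, hx, hxn, hxSlack⟩ := hF.exists_raiseBlock hδ hπc hwc hwa hGm hslack
  obtain ⟨hF', hlt⟩ := hF.isFeasiblePath_raiseBlock hδ hπc hwc hwa hGm hT hblock hx hxn hxSlack
  exact (hopt.surplus_le hδ hπc hwc hwa hF').not_gt hlt

end Binding

section BindingPaths

variable {δ : ℝ} {π w : ℝ → ℝ} {s s' p : ℕ → ℝ}

lemma IsBinding.mul_pi_succ (hδ : δ ∈ Ioo (0 : ℝ) 1) (hπc : ContinuousOn π (Icc 0 1))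
    (hwc : ContinuousOn w (Icc 0 1)) (hs : ∀ t, s t ∈ Icc (0 : ℝ) 1)
    (hb : IsBinding δ π w s) {t : ℕ} (ht : 1 ≤ t) :
    δ * π (s (t + 1)) = δ * π (s t) + w (s (t - 1)) - w (s t) := by
  have hrec := surplus_eq_add hδ hπc hwc hs t
  rw [hb t ht, hb (t + 1) (Nat.le_add_left 1 t), Nat.add_sub_cancel] at hrec
  field_simp [(sub_pos.2 hδ.2).ne'] at hrec
  linarith

lemma IsBinding.surplus_zero (hδ : δ ∈ Ioo (0 : ℝ) 1) (hπc : ContinuousOn π (Icc 0 1))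
    (hwc : ContinuousOn w (Icc 0 1)) (hF : IsFeasiblePath δ π w s) (hb : IsBinding δ π w s) :
    surplus δ π w s 0 = π 0 + w 0 + δ * ((π (s 1) + w 0) / (1 - δ)) := by
  rw [surplus_eq_add hδ hπc hwc hF.mem_Icc 0, hb 1 le_rfl, Nat.sub_self, hF.zero]

lemma IsBinding.eq (hδ : δ ∈ Ioo (0 : ℝ) 1) (hπc : ContinuousOn π (Icc 0 1))
    (hwc : ContinuousOn w (Icc 0 1)) (hπm : StrictMonoOn π (Icc 0 1))
    (hF : IsFeasiblePath δ π w s) (hF' : IsFeasiblePath δ π w s')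
    (hb : IsBinding δ π w s) (hb' : IsBinding δ π w s')
    (hS : surplus δ π w s 0 = surplus δ π w s' 0) : s = s' := by
  have hδ0 : δ ≠ 0 := hδ.1.ne'
  have h1 : s 1 = s' 1 := by
    rw [hb.surplus_zero hδ hπc hwc hF, hb'.surplus_zero hδ hπc hwc hF'] at hS
    field_simp [(sub_pos.2 hδ.2).ne'] at hS
    exact hπm.injOn (hF.mem_Icc 1) (hF'.mem_Icc 1) (mul_left_cancel₀ hδ0 (by linarith))
  have hpair : ∀ t, s t = s' t ∧ s (t + 1) = s' (t + 1) := by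
    intro t
    induction t with
    | zero => exact ⟨hF.zero.trans hF'.zero.symm, h1⟩
    | succ t ih =>
      refine ⟨ih.2, hπm.injOn (hF.mem_Icc _) (hF'.mem_Icc _) (mul_left_cancel₀ hδ0 ?_)⟩
      rw [hb.mul_pi_succ hδ hπc hwc hF.mem_Icc (Nat.le_add_left 1 t),
        hb'.mul_pi_succ hδ hπc hwc hF'.mem_Icc (Nat.le_add_left 1 t), Nat.add_sub_cancel,
        ih.1, ih.2]
  exact funext fun t => (hpair t).1

lemma Implementable.WVal_eq_of_isBinding (hδ : δ ∈ Ioo (0 : ℝ) 1)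
    (hπc : ContinuousOn π (Icc 0 1)) (hwc : ContinuousOn w (Icc 0 1))
    (himp : Implementable δ π w s p) (hb : IsBinding δ π w s) {t : ℕ} (ht : 1 ≤ t) :
    WVal δ w s p t = w (s (t - 1)) / (1 - δ) := by
  refine le_antisymm ?_ (himp.div_le_WVal hδ hwc t)
  have hPIC := himp.2.2.2.1 t
  have hsum := PiVal_add_WVal hδ hπc hwc himp.1.1 (himp.tailSummable hδ) t
  rw [hb t ht, add_div] at hsum
  linarith

lemma Implementable.payment_eq_of_isBinding (hδ : δ ∈ Ioo (0 : ℝ) 1)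
    (hπc : ContinuousOn π (Icc 0 1)) (hwc : ContinuousOn w (Icc 0 1))
    (himp : Implementable δ π w s p) (hb : IsBinding δ π w s) {t : ℕ} (ht : 1 ≤ t) :
    p t = (w (s (t - 1)) - w (s t)) / (1 - δ) := by
  have hrec := WVal_eq_add hδ hwc himp.1.1 (himp.tailSummable hδ) t
  rw [himp.WVal_eq_of_isBinding hδ hπc hwc hb ht,
    himp.WVal_eq_of_isBinding hδ hπc hwc hb (Nat.le_add_left 1 t), Nat.add_sub_cancel] at hrec
  field_simp [(sub_pos.2 hδ.2).ne'] at hrec ⊢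
  linarith

lemma Implementable.payment_zero_le_of_isBinding (hδ : δ ∈ Ioo (0 : ℝ) 1)
    (hπc : ContinuousOn π (Icc 0 1)) (hwc : ContinuousOn w (Icc 0 1))
    (himp : Implementable δ π w s p) (hb : IsBinding δ π w s) :
    p 0 ≤ δ * (π (s 1) - π 0) / (1 - δ) := by
  have hp := himp.tailSummable hδ
  have hPi1 : PiVal δ π s p 1 = π (s 1) / (1 - δ) := by
    have hsum := PiVal_add_WVal hδ hπc hwc himp.1.1 hp 1
    rw [himp.WVal_eq_of_isBinding hδ hπc hwc hb le_rfl, hb 1 le_rfl, add_div] at hsum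
    linarith
  have hPIC := himp.2.2.2.1 0
  have h1δ : 0 < 1 - δ := sub_pos.2 hδ.2
  rw [PiVal_eq_add hδ hπc himp.1.1 hp 0, hPi1, himp.1.2.1, div_le_iff₀ h1δ] at hPIC
  rw [le_div_iff₀ h1δ]
  field_simp at hPIC
  linarith

end BindingPaths

/-- Characterization of Pareto-efficient contracts. -/
theorem pareto_efficient_iff
    (δ : ℝ) (hδ : δ ∈ Set.Ioo (0 : ℝ) 1) (π w : ℝ → ℝ)
    (hπc : ContinuousOn π (Set.Icc 0 1)) (hwc : ContinuousOn w (Set.Icc 0 1))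
    (hπm : StrictMonoOn π (Set.Icc 0 1)) (hwa : StrictAntiOn w (Set.Icc 0 1))
    (hGm : StrictMonoOn (fun x => π x + w x) (Set.Icc 0 1))
    (sStar pStar : ℕ → ℝ) (hopt : Optimal δ π w sStar pStar)
    (s p : ℕ → ℝ) (himp : Implementable δ π w s p) :
    ParetoEfficient δ π w s p ↔
      ((∀ t, s t = sStar t) ∧
        0 ≤ p 0 ∧ p 0 ≤ δ * (π (sStar 1) - π 0) / (1 - δ) ∧
        (∀ t : ℕ, 1 ≤ t → p t = (w (sStar (t - 1)) - w (sStar t)) / (1 - δ))) := by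
  have hF := himp.isFeasiblePath hδ hπc hwc
  constructor
  · intro hpe
    have hS := hopt.surplus_eq_of_paretoEfficient hδ hπc hwc hwa hpe
    have hb := (hopt.optimal_bindingPay hδ hπc hwc hwa hF hS).isBinding hδ hπc hwc hwa hGm
    obtain rfl : s = sStar := hb.eq hδ hπc hwc hπm hF (hopt.1.isFeasiblePath hδ hπc hwc)
      (hopt.isBinding hδ hπc hwc hwa hGm) hS
    exact ⟨fun _ => rfl, himp.2.2.1 0, himp.payment_zero_le_of_isBinding hδ hπc hwc hb,
      fun _ => himp.payment_eq_of_isBinding hδ hπc hwc hb⟩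
  · rintro ⟨hs, -⟩
    obtain rfl : s = sStar := funext hs
    exact hopt.paretoEfficient_of_surplus_eq hδ hπc hwc hwa himp rfl
end

section
/- Frontloading preserves implementability: if (s,p) is an implementable contract, then (s, p*(s)) is also implementable, it satisfies W_{t+1}(s, p*(s)) = w(s_t)/(1−δ) for every t ≥ 0 (all (E-IC) constraints bind), and Π_0(s, p*(s)) ≥ Π_0(s,p). -/
/-!
Since `w ∘ s` is nonincreasing, `p*(s) ≥ 0`. The expert's value under `p*(s)` telescopes to
`W_{t+1} = w(s_t)/(1−δ)`, so every (E-IC) binds and `W_t(s, p*) ≤ W_t(s, p)` for all `t`.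
As `Π_t + W_t = Σ_k δ^k (π + w)(s_{t+k})` does not depend on the payments, the principal's value
can only go up, which gives (P-IC) for `p*(s)` and the profit comparison.
-/

open Set Filter

/-- The frontloaded payment scheme `p*(s)`: `p*_0 = 0`, `p*_t = (w(s_{t−1}) − w(s_t))/(1−δ)` for `t ≥ 1`. -/
noncomputable def payStar (δ : ℝ) (w : ℝ → ℝ) (s : ℕ → ℝ) (t : ℕ) : ℝ :=
  if t = 0 then 0 else (w (s (t - 1)) - w (s t)) / (1 - δ)

section Discounting

variable {δ : ℝ}

theorem summable_discount_of_mem_Icc (h0 : 0 ≤ δ) (h1 : δ < 1) {f : ℕ → ℝ} {a b : ℝ}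
    (hf : ∀ k, f k ∈ Icc a b) : Summable fun k => δ ^ k * f k := by
  refine Summable.of_norm_bounded ((summable_geometric_of_lt_one h0 h1).mul_right (max |a| |b|))
    fun k => ?_
  rw [norm_mul, norm_pow, Real.norm_of_nonneg h0, Real.norm_eq_abs]
  exact mul_le_mul_of_nonneg_left (abs_le_max_abs_abs (hf k).1 (hf k).2) (by positivity)

theorem summable_discount_shift (hδ : δ ≠ 0) {f : ℕ → ℝ}
    (hf : Summable fun k => δ ^ k * f k) (t : ℕ) : Summable fun k => δ ^ k * f (t + k) := by
  refine (summable_mul_left_iff (pow_ne_zero t hδ)).mp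
    (((summable_nat_add_iff t).mpr hf).congr fun k => ?_)
  rw [add_comm k t, pow_add, mul_assoc]

theorem tsum_discount_frontload (hδ : δ ≠ 1) {a : ℕ → ℝ} (ha : Summable fun k => δ ^ k * a k) :
    ∑' k, δ ^ k * (a (k + 1) + (a k - a (k + 1)) / (1 - δ)) = a 0 / (1 - δ) := by
  have h1δ : 1 - δ ≠ 0 := sub_ne_zero.mpr hδ.symm
  have ha' : Summable fun k => δ ^ (k + 1) * a (k + 1) := (summable_nat_add_iff 1).mpr ha
  calc ∑' k, δ ^ k * (a (k + 1) + (a k - a (k + 1)) / (1 - δ))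
      = (∑' k, δ ^ k * a k - ∑' k, δ ^ (k + 1) * a (k + 1)) / (1 - δ) := by
        rw [← ha.tsum_sub ha', ← tsum_div_const]
        congr 1 with k
        field_simp
        ring
    _ = a 0 / (1 - δ) := by rw [ha.tsum_eq_zero_add]; simp

end Discounting

section Contract

variable {δ : ℝ} {π w : ℝ → ℝ} {s p : ℕ → ℝ} {t : ℕ}

theorem payStar_zero : payStar δ w s 0 = 0 := rfl

theorem payStar_succ (t : ℕ) : payStar δ w s (t + 1) = (w (s t) - w (s (t + 1))) / (1 - δ) := by
  simp [payStar]

theorem payStar_nonneg (hδ : δ < 1) (hw : AntitoneOn w (Icc 0 1)) (hs : ∀ t, s t ∈ Icc 0 1)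
    (hmono : Monotone s) (t : ℕ) : 0 ≤ payStar δ w s t := by
  cases t with
  | zero => exact le_rfl
  | succ t =>
    rw [payStar_succ]
    exact div_nonneg (sub_nonneg.mpr (hw (hs t) (hs (t + 1)) (hmono t.le_succ)))
      (sub_nonneg.mpr hδ.le)

theorem summable_payStar (hw : Summable fun k => δ ^ k * w (s k)) :
    Summable fun k => δ ^ k * payStar δ w s k := by
  rw [← summable_nat_add_iff 1]
  refine (((hw.mul_left δ).sub ((summable_nat_add_iff 1).mpr hw)).div_const (1 - δ)).congr
    fun k => ?_
  rw [payStar_succ]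
  ring

theorem WVal_eq_add_s14 (hw : Summable fun k => δ ^ k * w (s (t + k)))
    (hp : Summable fun k => δ ^ k * p (t + k)) :
    WVal δ w s p t = w (s t) + p t + δ * WVal δ w s p (t + 1) := by
  have hsum : Summable fun k => δ ^ k * (w (s (t + k)) + p (t + k)) :=
    (hw.add hp).congr fun k => (mul_add _ _ _).symm
  rw [WVal, hsum.tsum_eq_zero_add, WVal, ← tsum_mul_left]
  simp only [pow_zero, one_mul, add_zero, ← add_assoc, add_right_comm t _ 1]
  congr 1
  exact tsum_congr fun k => by ring

theorem WVal_payStar_succ (hδ : δ ≠ 1) (hw : Summable fun k => δ ^ k * w (s (t + k))) :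
    WVal δ w s (payStar δ w s) (t + 1) = w (s t) / (1 - δ) := by
  have h := tsum_discount_frontload hδ hw
  rw [add_zero] at h
  rw [WVal, ← h]
  simp only [add_right_comm t 1, payStar_succ, ← add_assoc]

theorem WVal_payStar_le (hδ0 : 0 < δ) (hδ1 : δ ≠ 1) (hw : Summable fun k => δ ^ k * w (s k))
    (hp : Summable fun k => δ ^ k * p k) (hp0 : 0 ≤ p 0)
    (hEIC : ∀ t, w (s t) / (1 - δ) ≤ WVal δ w s p (t + 1)) :
    ∀ t, WVal δ w s (payStar δ w s) t ≤ WVal δ w s p t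
  | 0 => by
    have hw0 := summable_discount_shift hδ0.ne' hw 0
    rw [WVal_eq_add_s14 hw0 (summable_discount_shift hδ0.ne' (summable_payStar hw) 0),
      WVal_eq_add_s14 hw0 (summable_discount_shift hδ0.ne' hp 0), payStar_zero,
      WVal_payStar_succ hδ1 hw0]
    gcongr
    exact hEIC 0
  | t + 1 => by
    rw [WVal_payStar_succ hδ1 (summable_discount_shift hδ0.ne' hw t)]
    exact hEIC t

theorem PiVal_add_WVal_s14 (hπ : Summable fun k => δ ^ k * π (s (t + k)))
    (hw : Summable fun k => δ ^ k * w (s (t + k))) (hp : Summable fun k => δ ^ k * p (t + k)) :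
    PiVal δ π s p t + WVal δ w s p t = ∑' k, δ ^ k * (π (s (t + k)) + w (s (t + k))) := by
  have hπp : Summable fun k => δ ^ k * (π (s (t + k)) - p (t + k)) :=
    (hπ.sub hp).congr fun k => (mul_sub _ _ _).symm
  have hwp : Summable fun k => δ ^ k * (w (s (t + k)) + p (t + k)) :=
    (hw.add hp).congr fun k => (mul_add _ _ _).symm
  rw [PiVal, WVal, ← hπp.tsum_add hwp]
  congr 1 with k
  ring

theorem PiVal_le_PiVal_of_WVal_le {q : ℕ → ℝ} (hπ : Summable fun k => δ ^ k * π (s (t + k)))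
    (hw : Summable fun k => δ ^ k * w (s (t + k))) (hp : Summable fun k => δ ^ k * p (t + k))
    (hq : Summable fun k => δ ^ k * q (t + k)) (h : WVal δ w s q t ≤ WVal δ w s p t) :
    PiVal δ π s p t ≤ PiVal δ π s q t := by
  linarith [PiVal_add_WVal_s14 hπ hw hp, PiVal_add_WVal_s14 hπ hw hq]

end Contract

theorem frontloading_preserves_implementability_general
    (δ : ℝ) (hδ : δ ∈ Set.Ioo (0 : ℝ) 1) (π w : ℝ → ℝ)
    (hπm : StrictMonoOn π (Set.Icc 0 1)) (hwa : StrictAntiOn w (Set.Icc 0 1))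
    (s p : ℕ → ℝ) (himp : Implementable δ π w s p) :
    Implementable δ π w s (payStar δ w s) ∧
    (∀ t : ℕ, WVal δ w s (payStar δ w s) (t + 1) = w (s t) / (1 - δ)) ∧
    PiVal δ π s p 0 ≤ PiVal δ π s (payStar δ w s) 0 := by
  obtain ⟨⟨hs, hs0, hp⟩, hmono, hpnn, hPIC, hEIC⟩ := himp
  obtain ⟨hδ0, hδ1⟩ := hδ
  have shift := @summable_discount_shift δ hδ0.ne'
  have hwS : Summable fun k => δ ^ k * w (s k) :=
    summable_discount_of_mem_Icc hδ0.le hδ1 fun k => hwa.antitoneOn.mapsTo_Icc (hs k)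
  have hπS : Summable fun k => δ ^ k * π (s k) :=
    summable_discount_of_mem_Icc hδ0.le hδ1 fun k => hπm.monotoneOn.mapsTo_Icc (hs k)
  have hbind : ∀ t, WVal δ w s (payStar δ w s) (t + 1) = w (s t) / (1 - δ) :=
    fun t => WVal_payStar_succ hδ1.ne (shift hwS t)
  have hPi : ∀ t, PiVal δ π s p t ≤ PiVal δ π s (payStar δ w s) t := fun t =>
    PiVal_le_PiVal_of_WVal_le (shift hπS t) (shift hwS t) (shift hp t)
      (shift (summable_payStar hwS) t) (WVal_payStar_le hδ0 hδ1.ne hwS hp (hpnn 0) hEIC t)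
  exact ⟨⟨⟨hs, hs0, summable_payStar hwS⟩, hmono, payStar_nonneg hδ1 hwa.antitoneOn hs hmono,
    fun t => (hPIC t).trans (hPi t), fun t => (hbind t).ge⟩, hbind, hPi 0⟩

/-- Frontloading preserves implementability, binds all (E-IC), and
weakly improves the principal's time-0 profit. -/
theorem frontloading_preserves_implementability
    (δ : ℝ) (hδ : δ ∈ Set.Ioo (0 : ℝ) 1) (π w : ℝ → ℝ)
    (hπc : ContinuousOn π (Set.Icc 0 1)) (hwc : ContinuousOn w (Set.Icc 0 1))
    (hπm : StrictMonoOn π (Set.Icc 0 1)) (hwa : StrictAntiOn w (Set.Icc 0 1))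
    (hGm : StrictMonoOn (fun x => π x + w x) (Set.Icc 0 1))
    (s p : ℕ → ℝ) (himp : Implementable δ π w s p) :
    Implementable δ π w s (payStar δ w s) ∧
    (∀ t : ℕ, WVal δ w s (payStar δ w s) (t + 1) = w (s t) / (1 - δ)) ∧
    PiVal δ π s p 0 ≤ PiVal δ π s (payStar δ w s) 0 :=
  frontloading_preserves_implementability_general δ hδ π w hπm hwa s p himp
end
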